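/- Let n ≥ 2, a ∈ ℝ, j ∈ ℕ, and fix y ∈ ℝ^{n-1}. Define K_j : {x ∈ ℝⁿ : x_n ≠ 0} → ℝ by K_j(x) = x_n^j |x_n|^{1-a-2j} (|x'-y|² + x_n²)^{-(n-a-2j)/2}, where x = (x', x_n). Then Δ_a K_j(x) = j(j+a−1) K_j(x) for every x with x_n ≠ 0. -/

import Mathlib

/-- Directional derivative: `pd v u x = (fderiv ℝ u x) v`. -/
noncomputable def pd {E F : Type*} [NormedAddCommGroup E] [NormedSpace ℝ E]
    [NormedAddCommGroup F] [NormedSpace ℝ F] (v : E) (u : E → F) (x : E) : F :=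
  fderiv ℝ u x v

/-- The operator `Δ_a u = x_n² Δu + a x_n ∂u/∂x_n` on `ℝⁿ = ℝ^m × ℝ` (real valued). -/
noncomputable def deltaA (m : ℕ) (a : ℝ) (u : (Fin m → ℝ) × ℝ → ℝ)
    (x : (Fin m → ℝ) × ℝ) : ℝ :=
  x.2 ^ 2 *
      ((∑ j, pd (Pi.single j 1, (0 : ℝ)) (pd (Pi.single j 1, (0 : ℝ)) u) x)
        + pd ((0 : Fin m → ℝ), (1 : ℝ)) (pd ((0 : Fin m → ℝ), (1 : ℝ)) u) x)
    + a * x.2 * pd ((0 : Fin m → ℝ), (1 : ℝ)) u x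

/-- The kernel `K_j(x) = x_n^j |x_n|^{1-a-2j} (|x'-y|² + x_n²)^{-(n-a-2j)/2}`. -/
noncomputable def kerKj (n : ℕ) (a : ℝ) (j : ℕ) (y : Fin (n - 1) → ℝ)
    (x : (Fin (n - 1) → ℝ) × ℝ) : ℝ :=
  x.2 ^ j * |x.2| ^ (1 - a - 2 * (j : ℝ)) *
    ((∑ i, (x.1 i - y i) ^ 2) + x.2 ^ 2) ^ (-(((n : ℝ) - a - 2 * (j : ℝ)) / 2))

/-!
Write `K_j(x) = f(x_n) φ(Q(x))` with `Q(x) = |x' - y|² + x_n²`, `f(t) = t^j |t|^{1-a-2j}` and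
`φ(s) = s^q`, `q = -(n-a-2j)/2`. Away from `0` both factors satisfy Euler's equation
`s g'(s) = (degree) g(s)`, with degrees `c = 1 - a - j` and `q`. The product and chain rules then give
`Δ_a K_j = (c (c - 1 + a) + 2q (2c + 2q + n - 2 + a) x_n² / Q) K_j`; for these exponents the second
coefficient vanishes and the first is `j (j + a - 1)`.
-/

open Filter Topology

section DirectionalDerivative

variable {E : Type*} [NormedAddCommGroup E] [NormedSpace ℝ E] {f g h : E → ℝ} {x : E}

lemma pd_congr_of_eventuallyEq (hfg : f =ᶠ[𝓝 x] g) (v : E) : pd v f x = pd v g x := by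
  rw [pd, pd, hfg.fderiv_eq]

lemma pd_add (hf : DifferentiableAt ℝ f x) (hg : DifferentiableAt ℝ g x) (v : E) :
    pd v (fun z => f z + g z) x = pd v f x + pd v g x := by
  simp [pd, fderiv_fun_add hf hg]

lemma pd_mul (hf : DifferentiableAt ℝ f x) (hg : DifferentiableAt ℝ g x) (v : E) :
    pd v (fun z => f z * g z) x = f x * pd v g x + g x * pd v f x := by
  simp [pd, fderiv_fun_mul hf hg]

lemma pd_comp {φ : ℝ → ℝ} (hφ : DifferentiableAt ℝ φ (h x)) (hh : DifferentiableAt ℝ h x)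
    (v : E) : pd v (fun z => φ (h z)) x = deriv φ (h x) * pd v h x := by
  have hchain : HasFDerivAt (fun z => φ (h z)) (deriv φ (h x) • fderiv ℝ h x) x :=
    hφ.hasDerivAt.comp_hasFDerivAt x hh.hasFDerivAt
  simp [pd, hchain.fderiv]

lemma ContDiffAt.differentiableAt_pd (hf : ContDiffAt ℝ 2 f x) (v : E) :
    DifferentiableAt ℝ (pd v f) x :=
  ((hf.fderiv_right (m := 1) (by norm_num)).differentiableAt one_ne_zero).clm_apply
    (differentiableAt_const v)

lemma ContDiffAt.differentiableAt_deriv {φ : ℝ → ℝ} {s : ℝ} (hφ : ContDiffAt ℝ 2 φ s) :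
    DifferentiableAt ℝ (deriv φ) s :=
  hφ.differentiableAt_pd 1

lemma pd_pd_mul (hf : ContDiffAt ℝ 2 f x) (hg : ContDiffAt ℝ 2 g x) (v : E) :
    pd v (pd v fun z => f z * g z) x =
      f x * pd v (pd v g) x + 2 * pd v f x * pd v g x + g x * pd v (pd v f) x := by
  have hf1 := hf.differentiableAt two_ne_zero
  have hg1 := hg.differentiableAt two_ne_zero
  have hprod : pd v (fun z => f z * g z) =ᶠ[𝓝 x] fun z => f z * pd v g z + g z * pd v f z := by
    filter_upwards [hf.eventually (by simp), hg.eventually (by simp)] with z hfz hgz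
    exact pd_mul (hfz.differentiableAt two_ne_zero) (hgz.differentiableAt two_ne_zero) v
  rw [pd_congr_of_eventuallyEq hprod, pd_add (hf1.fun_mul (hg.differentiableAt_pd v))
    (hg1.fun_mul (hf.differentiableAt_pd v)), pd_mul hf1 (hg.differentiableAt_pd v),
    pd_mul hg1 (hf.differentiableAt_pd v)]
  ring

lemma pd_pd_comp {φ : ℝ → ℝ} (hφ : ContDiffAt ℝ 2 φ (h x)) (hh : ContDiffAt ℝ 2 h x) (v : E) :
    pd v (pd v fun z => φ (h z)) x =
      deriv (deriv φ) (h x) * pd v h x ^ 2 + deriv φ (h x) * pd v (pd v h) x := by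
  have hh1 := hh.differentiableAt two_ne_zero
  have hchain : pd v (fun z => φ (h z)) =ᶠ[𝓝 x] fun z => deriv φ (h z) * pd v h z := by
    filter_upwards [hh.continuousAt.eventually (hφ.eventually (by simp)), hh.eventually (by simp)]
      with z hφz hhz
    exact pd_comp (hφz.differentiableAt two_ne_zero) (hhz.differentiableAt two_ne_zero) v
  rw [pd_congr_of_eventuallyEq hchain,
    pd_mul (f := fun z => deriv φ (h z)) (hφ.differentiableAt_deriv.comp x hh1)
      (hh.differentiableAt_pd v),
    pd_comp hφ.differentiableAt_deriv hh1]
  ring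

lemma pd_snd (v z : E × ℝ) : pd v Prod.snd z = v.2 := by
  simp [pd, fderiv_snd]

lemma pd_pd_snd (v z : E × ℝ) : pd v (pd v Prod.snd) z = 0 := by
  simp [funext (pd_snd v), pd]

end DirectionalDerivative

section Homogeneous

variable {f : ℝ → ℝ} {c : ℝ}

lemma contDiffOn_of_hasDerivAt_homogeneous (hf : ∀ s ≠ 0, HasDerivAt f (c * f s / s) s) (n : ℕ) :
    ContDiffOn ℝ n f {s | s ≠ 0} := by
  induction n with
  | zero => exact contDiffOn_zero.2 fun s hs => (hf s hs).continuousAt.continuousWithinAt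
  | succ n ih =>
    refine (contDiffOn_succ_iff_deriv_of_isOpen (n := n) isOpen_ne).2
      ⟨fun s hs => (hf s hs).differentiableAt.differentiableWithinAt, by simp, ?_⟩
    have hquot : ContDiffOn ℝ n (fun s => c * f s / s) {s | s ≠ 0} :=
      (contDiffOn_const.mul ih).div contDiffOn_id fun s hs => hs
    exact hquot.congr fun s hs => (hf s hs).deriv

lemma contDiffAt_of_hasDerivAt_homogeneous (hf : ∀ s ≠ 0, HasDerivAt f (c * f s / s) s) (n : ℕ)
    {t : ℝ} (ht : t ≠ 0) : ContDiffAt ℝ n f t :=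
  (contDiffOn_of_hasDerivAt_homogeneous hf n).contDiffAt (isOpen_ne.mem_nhds ht)

lemma deriv_deriv_of_hasDerivAt_homogeneous (hf : ∀ s ≠ 0, HasDerivAt f (c * f s / s) s)
    {t : ℝ} (ht : t ≠ 0) : deriv (deriv f) t = c * (c - 1) * f t / t ^ 2 := by
  have hderiv : deriv f =ᶠ[𝓝 t] fun s => c * f s / s := by
    filter_upwards [isOpen_ne.mem_nhds ht] with s hs using (hf s hs).deriv
  have hderiv' : HasDerivAt (fun s => c * f s / s) _ t :=
    ((hf t ht).const_mul c).fun_div (hasDerivAt_id' t) ht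
  rw [hderiv.deriv_eq, hderiv'.deriv]
  field_simp

lemma HasDerivAt.mul_homogeneous {g : ℝ → ℝ} {d s : ℝ} (hf : HasDerivAt f (c * f s / s) s)
    (hg : HasDerivAt g (d * g s / s) s) :
    HasDerivAt (fun t => f t * g t) ((c + d) * (f s * g s) / s) s :=
  (hf.mul hg).congr_deriv (by ring)

lemma hasDerivAt_pow_homogeneous (j : ℕ) {s : ℝ} (hs : s ≠ 0) :
    HasDerivAt (fun t => t ^ j) (j * s ^ j / s) s := by
  refine (hasDerivAt_pow j s).congr_deriv ?_
  rcases j with _ | j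
  · simp
  · rw [pow_succ]; field_simp; simp

lemma hasDerivAt_abs_rpow_homogeneous (r : ℝ) {s : ℝ} (hs : s ≠ 0) :
    HasDerivAt (fun t => |t| ^ r) (r * |s| ^ r / s) s := by
  refine ((Real.hasDerivAt_rpow_const (p := r) (Or.inl (abs_ne_zero.2 hs))).comp s
    (hasDerivAt_abs hs)).congr_deriv ?_
  rw [Real.rpow_sub_one (abs_ne_zero.2 hs)]
  rcases hs.lt_or_gt with hs' | hs' <;>
    simp [hs', sign_neg, sign_pos, abs_of_neg, abs_of_pos] <;> field_simp

lemma hasDerivAt_rpow_const_homogeneous (q : ℝ) {s : ℝ} (hs : s ≠ 0) :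
    HasDerivAt (fun t => t ^ q) (q * s ^ q / s) s :=
  (Real.hasDerivAt_rpow_const (Or.inl hs)).congr_deriv (by rw [Real.rpow_sub_one hs, mul_div_assoc])

end Homogeneous

section SqDist

variable {m : ℕ}

lemma fderiv_fst_apply_apply (i : Fin m) (v z : (Fin m → ℝ) × ℝ) :
    fderiv ℝ (fun z : (Fin m → ℝ) × ℝ => z.1 i) z v = v.1 i := by
  have hcoord : HasFDerivAt (fun z : (Fin m → ℝ) × ℝ => z.1 i)
      ((ContinuousLinearMap.proj i).comp (ContinuousLinearMap.fst ℝ (Fin m → ℝ) ℝ)) z :=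
    ((ContinuousLinearMap.proj i).comp (ContinuousLinearMap.fst ℝ (Fin m → ℝ) ℝ)).hasFDerivAt
  rw [hcoord.fderiv]
  rfl

variable (y : Fin m → ℝ)

noncomputable def sqDist (z : (Fin m → ℝ) × ℝ) : ℝ := (∑ i, (z.1 i - y i) ^ 2) + z.2 ^ 2

lemma sqDist_pos {x : (Fin m → ℝ) × ℝ} (hx : x.2 ≠ 0) : 0 < sqDist y x :=
  add_pos_of_nonneg_of_pos (Finset.sum_nonneg fun i _ => sq_nonneg _) (by positivity)

lemma contDiff_sqDist : ContDiff ℝ 2 (sqDist y) := by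
  unfold sqDist; fun_prop

lemma pd_sqDist (v z : (Fin m → ℝ) × ℝ) :
    pd v (sqDist y) z = 2 * ((∑ i, (z.1 i - y i) * v.1 i) + z.2 * v.2) := by
  unfold pd sqDist
  simp (disch := fun_prop) [fderiv_fun_pow, fderiv_fun_add, fderiv_fun_sum, fderiv_sub_const,
    fderiv_snd, fderiv_fst_apply_apply, mul_add, Finset.mul_sum, mul_assoc]

lemma pd_pd_sqDist (v z : (Fin m → ℝ) × ℝ) :
    pd v (pd v (sqDist y)) z = 2 * ((∑ i, v.1 i ^ 2) + v.2 ^ 2) := by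
  simp only [funext (pd_sqDist y v)]
  unfold pd
  simp (disch := fun_prop) [fderiv_fun_add, fderiv_fun_sum, fderiv_sub_const, fderiv_const_mul,
    fderiv_mul_const, fderiv_snd, fderiv_fst_apply_apply, mul_add, Finset.mul_sum, sq]

variable {f φ : ℝ → ℝ} {c q : ℝ} {x : (Fin m → ℝ) × ℝ}

lemma pd_homogeneous_mul (hf : ∀ s ≠ 0, HasDerivAt f (c * f s / s) s)
    (hφ : ∀ s ≠ 0, HasDerivAt φ (q * φ s / s) s) (hx : x.2 ≠ 0) (v : (Fin m → ℝ) × ℝ) :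
    pd v (fun z => f z.2 * φ (sqDist y z)) x =
      (c * v.2 / x.2 + q * pd v (sqDist y) x / sqDist y x) * (f x.2 * φ (sqDist y x)) := by
  have hQ := (sqDist_pos y hx).ne'
  have hQ1 := (contDiff_sqDist y).contDiffAt.differentiableAt (x := x) two_ne_zero
  have hF : DifferentiableAt ℝ (fun z : (Fin m → ℝ) × ℝ => f z.2) x :=
    (hf _ hx).differentiableAt.comp x differentiableAt_snd
  have hG : DifferentiableAt ℝ (fun z => φ (sqDist y z)) x :=
    (hφ _ hQ).differentiableAt.comp x hQ1
  rw [pd_mul hF hG, pd_comp (h := Prod.snd) (hf _ hx).differentiableAt differentiableAt_snd,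
    pd_comp (hφ _ hQ).differentiableAt hQ1, (hf _ hx).deriv, (hφ _ hQ).deriv, pd_snd]
  field_simp
  ring

lemma pd_pd_homogeneous_mul (hf : ∀ s ≠ 0, HasDerivAt f (c * f s / s) s)
    (hφ : ∀ s ≠ 0, HasDerivAt φ (q * φ s / s) s) (hx : x.2 ≠ 0) (v : (Fin m → ℝ) × ℝ) :
    pd v (pd v fun z => f z.2 * φ (sqDist y z)) x =
      (c * (c - 1) * v.2 ^ 2 / x.2 ^ 2
        + 2 * c * q * v.2 * pd v (sqDist y) x / (x.2 * sqDist y x)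
        + q * (q - 1) * pd v (sqDist y) x ^ 2 / sqDist y x ^ 2
        + q * pd v (pd v (sqDist y)) x / sqDist y x) * (f x.2 * φ (sqDist y x)) := by
  have hQ := (sqDist_pos y hx).ne'
  have hfC : ContDiffAt ℝ 2 f x.2 := contDiffAt_of_hasDerivAt_homogeneous hf 2 hx
  have hφC : ContDiffAt ℝ 2 φ (sqDist y x) := contDiffAt_of_hasDerivAt_homogeneous hφ 2 hQ
  have hQC := (contDiff_sqDist y).contDiffAt (x := x)
  have hsndC : ContDiffAt ℝ 2 (Prod.snd : (Fin m → ℝ) × ℝ → ℝ) x := contDiffAt_snd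
  have hFC : ContDiffAt ℝ 2 (fun z : (Fin m → ℝ) × ℝ => f z.2) x := hfC.comp x hsndC
  have hGC : ContDiffAt ℝ 2 (fun z => φ (sqDist y z)) x := hφC.comp x hQC
  rw [pd_pd_mul hFC hGC, pd_pd_comp (h := Prod.snd) hfC hsndC,
    pd_pd_comp hφC hQC, pd_comp (h := Prod.snd) (hf _ hx).differentiableAt differentiableAt_snd,
    pd_comp (hφ _ hQ).differentiableAt (hQC.differentiableAt two_ne_zero),
    (hf _ hx).deriv, (hφ _ hQ).deriv, deriv_deriv_of_hasDerivAt_homogeneous hf hx,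
    deriv_deriv_of_hasDerivAt_homogeneous hφ hQ, pd_snd, pd_pd_snd]
  field_simp
  ring

lemma deltaA_homogeneous_mul (hf : ∀ s ≠ 0, HasDerivAt f (c * f s / s) s)
    (hφ : ∀ s ≠ 0, HasDerivAt φ (q * φ s / s) s) (a : ℝ) (hx : x.2 ≠ 0) :
    deltaA m a (fun z => f z.2 * φ (sqDist y z)) x =
      (c * (c - 1 + a) + 2 * q * (2 * c + 2 * q + m - 1 + a) * x.2 ^ 2 / sqDist y x)
        * (f x.2 * φ (sqDist y x)) := by
  have hQ := (sqDist_pos y hx).ne'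
  have hS : ∑ i, (x.1 i - y i) ^ 2 = sqDist y x - x.2 ^ 2 := by simp [sqDist]
  simp only [deltaA, pd_pd_homogeneous_mul y hf hφ hx, pd_homogeneous_mul y hf hφ hx, pd_sqDist,
    pd_pd_sqDist]
  simp only [ne_eq, OfNat.ofNat_ne_zero, not_false_eq_true, zero_pow, mul_zero, zero_div,
    Pi.single_apply, mul_ite, mul_one, Finset.sum_ite_eq', Finset.mem_univ, ↓reduceIte, add_zero,
    zero_mul, zero_add, ite_pow, one_pow, Pi.zero_apply, Finset.sum_const_zero]
  simp only [← Finset.sum_mul, Finset.sum_add_distrib, mul_pow, ← Finset.sum_div,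
    ← Finset.mul_sum, hS, Finset.sum_const, Finset.card_univ, Fintype.card_fin, nsmul_eq_mul]
  field_simp
  ring

end SqDist

/-- For every `x` with `x_n ≠ 0`, `Δ_a K_j(x) = j(j+a−1) K_j(x)`. -/
theorem statement5 (n : ℕ) (hn : 2 ≤ n) (a : ℝ) (j : ℕ) (y : Fin (n - 1) → ℝ)
    (x : (Fin (n - 1) → ℝ) × ℝ) (hx : x.2 ≠ 0) :
    deltaA (n - 1) a (kerKj n a j y) x = (j : ℝ) * ((j : ℝ) + a - 1) * kerKj n a j y x := by
  have hf (s : ℝ) (hs : s ≠ 0) := (hasDerivAt_pow_homogeneous j hs).mul_homogeneous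
    (hasDerivAt_abs_rpow_homogeneous (1 - a - 2 * (j : ℝ)) hs)
  have hφ (s : ℝ) (hs : s ≠ 0) :=
    hasDerivAt_rpow_const_homogeneous (-(((n : ℝ) - a - 2 * (j : ℝ)) / 2)) hs
  have hdim : ((n - 1 : ℕ) : ℝ) = n - 1 := by rw [Nat.cast_sub (by omega), Nat.cast_one]
  change deltaA (n - 1) a (fun z => (z.2 ^ j * |z.2| ^ (1 - a - 2 * (j : ℝ))) *
    sqDist y z ^ (-(((n : ℝ) - a - 2 * (j : ℝ)) / 2))) x = _
  rw [deltaA_homogeneous_mul y hf hφ a hx, hdim]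
  unfold kerKj sqDist
  ring
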